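/- A permutation σ of length n belongs to the juxtaposition class Av(231|12) if and only if σ avoids all three of the patterns 2314, 2413, and 3412. -/
import Mathlib


/-- `σ` contains an occurrence of the pattern `π` using only positions in `S`. -/
def ContainsIn {n m : ℕ} (σ : Equiv.Perm (Fin n)) (π : Equiv.Perm (Fin m))
    (S : Set (Fin n)) : Prop :=
  ∃ f : Fin m → Fin n, StrictMono f ∧ (∀ s, f s ∈ S) ∧
    ∀ s t : Fin m, σ (f s) < σ (f t) ↔ π s < π t

/-- `σ` contains an occurrence of the pattern `π`. -/
def Contains {n m : ℕ} (σ : Equiv.Perm (Fin n)) (π : Equiv.Perm (Fin m)) : Prop :=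
  ContainsIn σ π Set.univ

/-- `σ` avoids the pattern `π`. -/
def Avoids {n m : ℕ} (σ : Equiv.Perm (Fin n)) (π : Equiv.Perm (Fin m)) : Prop :=
  ¬ Contains σ π

/-- `σ` lies in the juxtaposition class `Av(P|Q)`: positions split at some cut `k`
(`0 ≤ k ≤ n`), no occurrence of `P` within the first `k` positions and no occurrence
of `Q` within the remaining positions. -/
def JuxtAv {n p q : ℕ} (P : Equiv.Perm (Fin p)) (Q : Equiv.Perm (Fin q))
    (σ : Equiv.Perm (Fin n)) : Prop :=
  ∃ k ≤ n, ¬ ContainsIn σ P {i : Fin n | (i : ℕ) < k} ∧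
    ¬ ContainsIn σ Q {i : Fin n | k ≤ (i : ℕ)}

noncomputable def p231 : Equiv.Perm (Fin 3) :=
  Equiv.ofBijective (![1,2,0] : Fin 3 → Fin 3) (by decide)

noncomputable def p12 : Equiv.Perm (Fin 2) :=
  Equiv.ofBijective (![0,1] : Fin 2 → Fin 2) (by decide)

noncomputable def p2314 : Equiv.Perm (Fin 4) :=
  Equiv.ofBijective (![1,2,0,3] : Fin 4 → Fin 4) (by decide)

noncomputable def p2413 : Equiv.Perm (Fin 4) :=
  Equiv.ofBijective (![1,3,0,2] : Fin 4 → Fin 4) (by decide)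

noncomputable def p3412 : Equiv.Perm (Fin 4) :=
  Equiv.ofBijective (![2,3,0,1] : Fin 4 → Fin 4) (by decide)

lemma containsIn_p231 {n : ℕ} (σ : Equiv.Perm (Fin n)) (S : Set (Fin n)) {a b c : Fin n}
    (ha : a ∈ S) (hb : b ∈ S) (hc : c ∈ S) (hab : a < b) (hbc : b < c)
    (v1 : σ c < σ a) (v2 : σ a < σ b) : ContainsIn σ p231 S := by
  refine ⟨![a,b,c], ?_, ?_, ?_⟩
  · intro s t hst
    fin_cases s <;> fin_cases t <;>
      first
        | exact absurd hst (by decide)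
        | exact hab | exact hbc | exact hab.trans hbc
  · intro s; fin_cases s
    · exact ha
    · exact hb
    · exact hc
  · intro s t; fin_cases s <;> fin_cases t
    · exact iff_of_false (lt_irrefl _) (by decide)
    · exact iff_of_true v2 (by decide)
    · exact iff_of_false (asymm v1) (by decide)
    · exact iff_of_false (asymm v2) (by decide)
    · exact iff_of_false (lt_irrefl _) (by decide)
    · exact iff_of_false (asymm (v1.trans v2)) (by decide)
    · exact iff_of_true v1 (by decide)
    · exact iff_of_true (v1.trans v2) (by decide)
    · exact iff_of_false (lt_irrefl _) (by decide)

lemma containsIn_p12 {n : ℕ} (σ : Equiv.Perm (Fin n)) (S : Set (Fin n)) {a b : Fin n}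
    (ha : a ∈ S) (hb : b ∈ S) (hab : a < b) (v : σ a < σ b) : ContainsIn σ p12 S := by
  refine ⟨![a,b], ?_, ?_, ?_⟩
  · intro s t hst
    fin_cases s <;> fin_cases t <;>
      first
        | exact absurd hst (by decide)
        | exact hab
  · intro s; fin_cases s
    · exact ha
    · exact hb
  · intro s t; fin_cases s <;> fin_cases t
    · exact iff_of_false (lt_irrefl _) (by decide)
    · exact iff_of_true v (by decide)
    · exact iff_of_false (asymm v) (by decide)
    · exact iff_of_false (lt_irrefl _) (by decide)

lemma contains_p2314 {n : ℕ} (σ : Equiv.Perm (Fin n)) {a b c d : Fin n}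
    (hab : a < b) (hbc : b < c) (hcd : c < d)
    (w1 : σ c < σ a) (w2 : σ a < σ b) (w3 : σ b < σ d) : Contains σ p2314 := by
  refine ⟨![a,b,c,d], ?_, fun s => Set.mem_univ _, ?_⟩
  · intro s t hst
    fin_cases s <;> fin_cases t <;>
      first
        | exact absurd hst (by decide)
        | exact hab | exact hbc | exact hcd
        | exact hab.trans hbc | exact hbc.trans hcd
        | exact (hab.trans hbc).trans hcd
  · intro s t; fin_cases s <;> fin_cases t
    · exact iff_of_false (lt_irrefl _) (by decide)
    · exact iff_of_true w2 (by decide)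
    · exact iff_of_false (asymm w1) (by decide)
    · exact iff_of_true (w2.trans w3) (by decide)
    · exact iff_of_false (asymm w2) (by decide)
    · exact iff_of_false (lt_irrefl _) (by decide)
    · exact iff_of_false (asymm (w1.trans w2)) (by decide)
    · exact iff_of_true w3 (by decide)
    · exact iff_of_true w1 (by decide)
    · exact iff_of_true (w1.trans w2) (by decide)
    · exact iff_of_false (lt_irrefl _) (by decide)
    · exact iff_of_true ((w1.trans w2).trans w3) (by decide)
    · exact iff_of_false (asymm (w2.trans w3)) (by decide)
    · exact iff_of_false (asymm w3) (by decide)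
    · exact iff_of_false (asymm ((w1.trans w2).trans w3)) (by decide)
    · exact iff_of_false (lt_irrefl _) (by decide)

lemma contains_p2413 {n : ℕ} (σ : Equiv.Perm (Fin n)) {a b c d : Fin n}
    (hab : a < b) (hbc : b < c) (hcd : c < d)
    (w1 : σ c < σ a) (w2 : σ a < σ d) (w3 : σ d < σ b) : Contains σ p2413 := by
  refine ⟨![a,b,c,d], ?_, fun s => Set.mem_univ _, ?_⟩
  · intro s t hst
    fin_cases s <;> fin_cases t <;>
      first
        | exact absurd hst (by decide)
        | exact hab | exact hbc | exact hcd
        | exact hab.trans hbc | exact hbc.trans hcd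
        | exact (hab.trans hbc).trans hcd
  · intro s t; fin_cases s <;> fin_cases t
    · exact iff_of_false (lt_irrefl _) (by decide)
    · exact iff_of_true (w2.trans w3) (by decide)
    · exact iff_of_false (asymm w1) (by decide)
    · exact iff_of_true w2 (by decide)
    · exact iff_of_false (asymm (w2.trans w3)) (by decide)
    · exact iff_of_false (lt_irrefl _) (by decide)
    · exact iff_of_false (asymm (w1.trans (w2.trans w3))) (by decide)
    · exact iff_of_false (asymm w3) (by decide)
    · exact iff_of_true w1 (by decide)
    · exact iff_of_true (w1.trans (w2.trans w3)) (by decide)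
    · exact iff_of_false (lt_irrefl _) (by decide)
    · exact iff_of_true (w1.trans w2) (by decide)
    · exact iff_of_false (asymm w2) (by decide)
    · exact iff_of_true w3 (by decide)
    · exact iff_of_false (asymm (w1.trans w2)) (by decide)
    · exact iff_of_false (lt_irrefl _) (by decide)

lemma contains_p3412 {n : ℕ} (σ : Equiv.Perm (Fin n)) {a b c d : Fin n}
    (hab : a < b) (hbc : b < c) (hcd : c < d)
    (w1 : σ c < σ d) (w2 : σ d < σ a) (w3 : σ a < σ b) : Contains σ p3412 := by
  refine ⟨![a,b,c,d], ?_, fun s => Set.mem_univ _, ?_⟩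
  · intro s t hst
    fin_cases s <;> fin_cases t <;>
      first
        | exact absurd hst (by decide)
        | exact hab | exact hbc | exact hcd
        | exact hab.trans hbc | exact hbc.trans hcd
        | exact (hab.trans hbc).trans hcd
  · intro s t; fin_cases s <;> fin_cases t
    · exact iff_of_false (lt_irrefl _) (by decide)
    · exact iff_of_true w3 (by decide)
    · exact iff_of_false (asymm (w1.trans w2)) (by decide)
    · exact iff_of_false (asymm w2) (by decide)
    · exact iff_of_false (asymm w3) (by decide)
    · exact iff_of_false (lt_irrefl _) (by decide)
    · exact iff_of_false (asymm ((w1.trans w2).trans w3)) (by decide)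
    · exact iff_of_false (asymm (w2.trans w3)) (by decide)
    · exact iff_of_true (w1.trans w2) (by decide)
    · exact iff_of_true ((w1.trans w2).trans w3) (by decide)
    · exact iff_of_false (lt_irrefl _) (by decide)
    · exact iff_of_true w1 (by decide)
    · exact iff_of_true w2 (by decide)
    · exact iff_of_true (w2.trans w3) (by decide)
    · exact iff_of_false (asymm w1) (by decide)
    · exact iff_of_false (lt_irrefl _) (by decide)

lemma aux_forward {n k : ℕ} (σ : Equiv.Perm (Fin n))
    (hP : ¬ ContainsIn σ p231 {i : Fin n | (i : ℕ) < k})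
    (hQ : ¬ ContainsIn σ p12 {i : Fin n | k ≤ (i : ℕ)})
    (f : Fin 4 → Fin n) (hf : StrictMono f)
    (u1 : σ (f 2) < σ (f 0)) (u2 : σ (f 0) < σ (f 1)) (u3 : σ (f 2) < σ (f 3)) : False := by
  have h01 : (f 0 : ℕ) < (f 1 : ℕ) := hf (by decide)
  have h12 : (f 1 : ℕ) < (f 2 : ℕ) := hf (by decide)
  have h23 : (f 2 : ℕ) < (f 3 : ℕ) := hf (by decide)
  by_cases hc : (f 2 : ℕ) < k
  · exact hP (containsIn_p231 σ _ (show (f 0 : ℕ) < k by omega)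
      (show (f 1 : ℕ) < k by omega) hc (hf (by decide)) (hf (by decide)) u1 u2)
  · exact hQ (containsIn_p12 σ _ (show k ≤ (f 2 : ℕ) by omega)
      (show k ≤ (f 3 : ℕ) by omega) (hf (by decide)) u3)

theorem stmt {n : ℕ} (σ : Equiv.Perm (Fin n)) :
    JuxtAv p231 p12 σ ↔ Avoids σ p2314 ∧ Avoids σ p2413 ∧ Avoids σ p3412 := by
  classical
  constructor
  · rintro ⟨k, hk, hP, hQ⟩
    refine ⟨?_, ?_, ?_⟩
    · rintro ⟨f, hf, -, hpat⟩
      exact aux_forward σ hP hQ f hf ((hpat 2 0).mpr (by decide))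
        ((hpat 0 1).mpr (by decide)) ((hpat 2 3).mpr (by decide))
    · rintro ⟨f, hf, -, hpat⟩
      exact aux_forward σ hP hQ f hf ((hpat 2 0).mpr (by decide))
        ((hpat 0 1).mpr (by decide)) ((hpat 2 3).mpr (by decide))
    · rintro ⟨f, hf, -, hpat⟩
      exact aux_forward σ hP hQ f hf ((hpat 2 0).mpr (by decide))
        ((hpat 0 1).mpr (by decide)) ((hpat 2 3).mpr (by decide))
  · rintro ⟨h1, h2, h3⟩
    by_cases hC : Contains σ p231
    · obtain ⟨f, hf, -, hpat⟩ := hC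
      have hex : ∃ m : ℕ, ∃ a b c : Fin n, (c : ℕ) = m ∧ a < b ∧ b < c ∧
          σ c < σ a ∧ σ a < σ b :=
        ⟨f 2, f 0, f 1, f 2, rfl, hf (by decide), hf (by decide),
          (hpat 2 0).mpr (by decide), (hpat 0 1).mpr (by decide)⟩
      obtain ⟨a, b, c, hcm, hab, hbc, v1, v2⟩ := Nat.find_spec hex
      refine ⟨Nat.find hex, by omega, ?_, ?_⟩
      · rintro ⟨g, hg, hmem, hgpat⟩
        have h2' : (g 2 : ℕ) < Nat.find hex := hmem 2
        exact Nat.find_min hex h2' ⟨g 0, g 1, g 2, rfl, hg (by decide), hg (by decide),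
          (hgpat 2 0).mpr (by decide), (hgpat 0 1).mpr (by decide)⟩
      · rintro ⟨g, hg, hmem, hgpat⟩
        have h0 : Nat.find hex ≤ (g 0 : ℕ) := hmem 0
        have hi12 : g 0 < g 1 := hg (by decide)
        have w : σ (g 0) < σ (g 1) := (hgpat 0 1).mpr (by decide)
        have hc1 : c ≤ g 0 := by rw [Fin.le_def]; omega
        rcases lt_trichotomy (σ (g 0)) (σ a) with h | h | h
        · have hb0 : b < g 0 := lt_of_lt_of_le hbc hc1
          rcases lt_trichotomy (σ (g 1)) (σ a) with h' | h' | h'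
          · exact h3 (contains_p3412 σ hab hb0 hi12 w h' v2)
          · exact (hab.trans (hb0.trans hi12)).ne' (σ.injective h')
          · rcases lt_trichotomy (σ (g 1)) (σ b) with h'' | h'' | h''
            · exact h2 (contains_p2413 σ hab hb0 hi12 h h' h'')
            · exact (hb0.trans hi12).ne' (σ.injective h'')
            · exact h1 (contains_p2314 σ hab hb0 hi12 h v2 h'')
        · exact ((hab.trans hbc).trans_le hc1).ne' (σ.injective h)
        · have hcg : c < g 0 :=
            lt_of_le_of_ne hc1 (fun he => (v1.trans h).ne (congrArg σ he))
          rcases lt_trichotomy (σ (g 0)) (σ b) with h' | h' | h'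
          · exact h2 (contains_p2413 σ hab hbc hcg v1 h h')
          · exact (hbc.trans hcg).ne' (σ.injective h')
          · exact h1 (contains_p2314 σ hab hbc hcg v1 v2 h')
    · refine ⟨n, le_refl n, ?_, ?_⟩
      · rintro ⟨g, hg, -, hgpat⟩
        exact hC ⟨g, hg, fun s => Set.mem_univ _, hgpat⟩
      · rintro ⟨g, -, hmem, -⟩
        have := hmem 0
        simp only [Set.mem_setOf_eq] at this
        omega
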